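/- arXiv:1809.00516 — 3 statements merged into one kernel-verified Lean document; each statement's English description precedes it below -/
import Mathlib

section
/- Let φ_t = ωt + γW_t with W standard Brownian motion, γ > 0, c = iω − γ²/2 ≠ 0, and Z_t = ∫_0^t e^{iφ_s} ds. Then E[|Z_t|²] = c⁻²(e^{ct} − 1 − ct) + conj(c)⁻²(e^{conj(c)t} − 1 − conj(c)t) for all t ≥ 0. -/
/-!
Writing `|Z_t|² = ∫∫_{[0,t]²} conj(e^{iφ_u}) e^{iφ_s} du ds` and exchanging the expectation with
the double integral (the integrand has modulus one), everything reduces to the covariance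
`E[conj(e^{iφ_u}) e^{iφ_s}]`. For `u ≤ s` it is `e^{iω(s-u)}` times the characteristic function of
the Gaussian increment `γ(W_s - W_u)`, i.e. `e^{c(s-u)}`, and its conjugate for `u > s`.
Integrating this kernel over the square gives the two conjugate terms.
-/

open MeasureTheory ProbabilityTheory

/-- A standard real Brownian motion started at `0`: measurable marginals, a.s. starting
at `0`, a.s. continuous paths, Gaussian increments of mean `0` and variance `t − s`,
and independent increments. -/
structure IsStdBrownian {Ω : Type*} [MeasurableSpace Ω] (μ : Measure Ω)
    (W : ℝ → Ω → ℝ) : Prop where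
  meas : ∀ t, Measurable (W t)
  start : ∀ᵐ x ∂μ, W 0 x = 0
  cont : ∀ᵐ x ∂μ, Continuous fun t => W t x
  incr_law : ∀ s t : ℝ, 0 ≤ s → s ≤ t →
    μ.map (fun x => W t x - W s x) = gaussianReal 0 (Real.toNNReal (t - s))
  indep_incr : ∀ (n : ℕ) (ts : Fin (n + 1) → ℝ), Monotone ts →
    iIndepFun
      (fun (i : Fin n) x => W (ts i.succ) x - W (ts i.castSucc) x) μ

open Complex Set Function TopologicalSpace
open scoped ComplexConjugate

lemma exists_measurable_uncurry_ae_eq_of_ae_continuous {ι Ω β : Type*}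
    [TopologicalSpace ι] [MetrizableSpace ι] [MeasurableSpace ι] [SecondCountableTopology ι]
    [OpensMeasurableSpace ι] [MeasurableSpace Ω] {μ : Measure Ω}
    [TopologicalSpace β] [PseudoMetrizableSpace β] [MeasurableSpace β] [BorelSpace β]
    [Nonempty β] {W : ι → Ω → β} (hmeas : ∀ t, Measurable (W t))
    (hcont : ∀ᵐ x ∂μ, Continuous fun t => W t x) :
    ∃ W' : ι → Ω → β, Measurable (uncurry W') ∧ ∀ᵐ x ∂μ, ∀ t, W' t x = W t x := by
  classical
  obtain ⟨G, hGae, hG, hGcont⟩ := hcont.exists_measurable_mem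
  refine ⟨fun t x => if x ∈ G then W t x else Classical.arbitrary β,
    measurable_uncurry_of_continuous_of_measurable (fun x => ?_)
      (fun t => (hmeas t).ite hG measurable_const), ?_⟩
  · by_cases hx : x ∈ G
    · simpa [hx] using hGcont x hx
    · simpa [hx] using continuous_const
  · filter_upwards [hGae] with x hx t
    simp [hx]

section SecondMoment

variable {T Ω : Type*} [MeasurableSpace T] [MeasurableSpace Ω]
  {ν : Measure T} {μ : Measure Ω} [IsFiniteMeasure ν] [IsFiniteMeasure μ]

lemma integral_conj_integral_mul_integral {X : T → Ω → ℂ} (hX : Measurable (uncurry X))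
    {C : ℝ} (hC : ∀ s x, ‖X s x‖ ≤ C) :
    ∫ x, conj (∫ s, X s x ∂ν) * ∫ s, X s x ∂ν ∂μ
      = ∫ p : T × T, ∫ x, conj (X p.1 x) * X p.2 x ∂μ ∂(ν.prod ν) := by
  simp_rw [← integral_conj, ← integral_prod_mul]
  refine integral_integral_swap (Integrable.mono' (integrable_const (C * C)) ?_ ?_)
  · have hfst : Measurable fun q : Ω × (T × T) => X q.2.1 q.1 :=
      hX.comp (measurable_snd.fst.prodMk measurable_fst)
    have hsnd : Measurable fun q : Ω × (T × T) => X q.2.2 q.1 :=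
      hX.comp (measurable_snd.snd.prodMk measurable_fst)
    exact ((continuous_conj.measurable.comp hfst).mul hsnd).aestronglyMeasurable
  · refine .of_forall fun q => ?_
    simp only [uncurry, norm_mul, Complex.norm_conj]
    exact mul_le_mul (hC _ _) (hC _ _) (norm_nonneg _) ((norm_nonneg _).trans (hC q.2.1 q.1))

end SecondMoment

noncomputable def expCov (c : ℂ) (u s : ℝ) : ℂ :=
  if u ≤ s then cexp (c * (s - u)) else cexp (conj c * (u - s))

lemma continuous_expCov (c : ℂ) : Continuous (uncurry (expCov c)) :=
  Continuous.if_le (by fun_prop) (by fun_prop) continuous_fst continuous_snd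
    fun p h => by simp [h]

lemma integral_cexp_mul_sub_one_div {a : ℂ} (ha : a ≠ 0) (t : ℝ) :
    ∫ u in (0 : ℝ)..t, (cexp (a * u) - 1) / a = (a ^ 2)⁻¹ * (cexp (a * t) - 1 - a * t) := by
  rw [intervalIntegral.integral_div, intervalIntegral.integral_sub
    (Continuous.intervalIntegrable (by fun_prop) _ _) intervalIntegrable_const,
    integral_exp_mul_complex ha]
  simp only [ofReal_zero, mul_zero, exp_zero, intervalIntegral.integral_const, sub_zero, real_smul,
    mul_one]
  field_simp

lemma integral_expCov_right {c : ℂ} (hc : c ≠ 0) {u t : ℝ} (hu : 0 ≤ u) (hut : u ≤ t) :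
    ∫ s in (0 : ℝ)..t, expCov c u s
      = (cexp (conj c * u) - 1) / conj c + (cexp (c * (t - u)) - 1) / c := by
  have hc' : conj c ≠ 0 := (map_ne_zero _).mpr hc
  have before : ∫ s in (0 : ℝ)..u, expCov c u s = (cexp (conj c * u) - 1) / conj c := by
    rw [intervalIntegral.integral_congr (g := fun s : ℝ => cexp (conj c * ↑(u - s)))]
    · simp only [intervalIntegral.integral_comp_sub_left (fun s : ℝ => cexp (conj c * s)),
        integral_exp_mul_complex hc']
      simp
    · intro s hs
      rw [uIcc_of_le hu] at hs
      rcases hs.2.eq_or_lt with rfl | hsu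
      · simp [expCov]
      · simp [expCov, hsu.not_ge]
  have after : ∫ s in u..t, expCov c u s = (cexp (c * (t - u)) - 1) / c := by
    rw [intervalIntegral.integral_congr (g := fun s : ℝ => cexp (c * ↑(s - u)))]
    · simp only [intervalIntegral.integral_comp_sub_right (fun s : ℝ => cexp (c * s)),
        integral_exp_mul_complex hc]
      simp
    · intro s hs
      rw [uIcc_of_le hut] at hs
      simp [expCov, hs.1]
  have hint : ∀ a b : ℝ, IntervalIntegrable (expCov c u) volume a b :=
    ((continuous_expCov c).uncurry_left u).intervalIntegrable
  rw [← intervalIntegral.integral_add_adjacent_intervals (hint 0 u) (hint u t), before, after]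

lemma integral_expCov_prod {c : ℂ} (hc : c ≠ 0) {t : ℝ} (ht : 0 ≤ t) :
    ∫ p, expCov c p.1 p.2 ∂((volume.restrict (Ioc 0 t)).prod (volume.restrict (Ioc 0 t)))
      = (c ^ 2)⁻¹ * (cexp (c * t) - 1 - c * t)
        + (conj c ^ 2)⁻¹ * (cexp (conj c * t) - 1 - conj c * t) := by
  have hint : Integrable (fun p : ℝ × ℝ => expCov c p.1 p.2)
      ((volume.restrict (Ioc 0 t)).prod (volume.restrict (Ioc 0 t))) := by
    rw [Measure.prod_restrict, ← Measure.volume_eq_prod]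
    exact ((continuous_expCov c).continuousOn.integrableOn_compact
      (isCompact_Icc.prod isCompact_Icc)).mono_set
      (prod_mono Ioc_subset_Icc_self Ioc_subset_Icc_self)
  have hc' : conj c ≠ 0 := (map_ne_zero _).mpr hc
  have hA : IntervalIntegrable (fun u : ℝ => (cexp (conj c * u) - 1) / conj c) volume 0 t :=
    (by fun_prop : Continuous _).intervalIntegrable _ _
  have hB : IntervalIntegrable (fun u : ℝ => (cexp (c * ↑(t - u)) - 1) / c) volume 0 t :=
    (by fun_prop : Continuous _).intervalIntegrable _ _
  rw [integral_prod _ hint]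
  simp_rw [← intervalIntegral.integral_of_le ht]
  rw [intervalIntegral.integral_congr (g := fun u : ℝ =>
      (cexp (conj c * u) - 1) / conj c + (cexp (c * ↑(t - u)) - 1) / c),
    intervalIntegral.integral_add hA hB,
    intervalIntegral.integral_comp_sub_left (fun u : ℝ => (cexp (c * u) - 1) / c), sub_self,
    sub_zero, integral_cexp_mul_sub_one_div hc, integral_cexp_mul_sub_one_div hc', add_comm]
  intro u hu
  rw [uIcc_of_le ht] at hu
  simpa using integral_expCov_right hc hu.1 hu.2

namespace IsStdBrownian

variable {Ω : Type*} [MeasurableSpace Ω] {μ : Measure Ω} {W : ℝ → Ω → ℝ}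

lemma integral_cexp_mul_increment (hW : IsStdBrownian μ W) (a : ℝ) {u s : ℝ} (hu : 0 ≤ u)
    (hus : u ≤ s) :
    ∫ x, cexp (a * ((W s x - W u x : ℝ) : ℂ) * I) ∂μ = cexp (-(a ^ 2 * (s - u)) / 2) := by
  calc ∫ x, cexp (a * ((W s x - W u x : ℝ) : ℂ) * I) ∂μ
      = ∫ y : ℝ, cexp (a * y * I) ∂(μ.map fun x => W s x - W u x) :=
        (integral_map ((hW.meas s).sub (hW.meas u)).aemeasurable
          (by fun_prop : Continuous fun y : ℝ => cexp (a * y * I)).aestronglyMeasurable).symm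
    _ = charFun (gaussianReal 0 (s - u).toNNReal) a := by
        rw [hW.incr_law u s hu hus, charFun_apply_real]
    _ = cexp (-(a ^ 2 * (s - u)) / 2) := by
        rw [charFun_gaussianReal, Real.coe_toNNReal _ (sub_nonneg.2 hus)]
        push_cast
        ring_nf

lemma integral_conj_cexp_mul_cexp_of_le (hW : IsStdBrownian μ W) (omg γ : ℝ) {u s : ℝ}
    (hu : 0 ≤ u) (hus : u ≤ s) :
    ∫ x, conj (cexp (I * (omg * u + γ * W u x))) * cexp (I * (omg * s + γ * W s x)) ∂μ
      = cexp ((I * omg - γ ^ 2 / 2) * (s - u)) := by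
  have hsplit : ∀ x, conj (cexp (I * (omg * u + γ * W u x))) * cexp (I * (omg * s + γ * W s x))
      = cexp (I * omg * (s - u)) * cexp (γ * ((W s x - W u x : ℝ) : ℂ) * I) := by
    intro x
    rw [← exp_conj, ← exp_add, ← exp_add]
    simp only [map_mul, map_add, conj_I, conj_ofReal, ofReal_sub]
    ring_nf
  simp_rw [hsplit]
  rw [integral_const_mul, hW.integral_cexp_mul_increment γ hu hus, ← exp_add]
  ring_nf

lemma integral_conj_cexp_mul_cexp (hW : IsStdBrownian μ W) (omg γ : ℝ) {u s : ℝ}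
    (hu : 0 ≤ u) (hs : 0 ≤ s) :
    ∫ x, conj (cexp (I * (omg * u + γ * W u x))) * cexp (I * (omg * s + γ * W s x)) ∂μ
      = expCov (I * omg - γ ^ 2 / 2) u s := by
  rw [expCov]
  split_ifs with hus
  · exact hW.integral_conj_cexp_mul_cexp_of_le omg γ hu hus
  · calc _ = conj (∫ x, conj (cexp (I * (omg * s + γ * W s x)))
              * cexp (I * (omg * u + γ * W u x)) ∂μ) := by
          rw [← integral_conj]
          simp only [map_mul, conj_conj, mul_comm]
      _ = _ := by
          rw [hW.integral_conj_cexp_mul_cexp_of_le omg γ hs (le_of_not_ge hus), ← exp_conj]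
          simp

end IsStdBrownian

theorem expectation_abs_sq_Z_general
    {Ω : Type*} [MeasurableSpace Ω] (μ : Measure Ω) [IsProbabilityMeasure μ]
    (W : ℝ → Ω → ℝ) (hW : IsStdBrownian μ W)
    (omg γ : ℝ) (c : ℂ) (hc : c = Complex.I * omg - (γ : ℂ) ^ 2 / 2)
    (hc0 : c ≠ 0) (t : ℝ) (ht : 0 ≤ t)
    (Z : ℝ → Ω → ℂ)
    (hZ : ∀ u x, Z u x = ∫ s in (0:ℝ)..u,
        Complex.exp (Complex.I * ((omg : ℂ) * s + (γ : ℂ) * (W s x : ℂ)))) :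
    ∫ x, (starRingEnd ℂ) (Z t x) * Z t x ∂μ =
      (c ^ 2)⁻¹ * (Complex.exp (c * t) - 1 - c * t)
        + ((starRingEnd ℂ c) ^ 2)⁻¹ *
          (Complex.exp ((starRingEnd ℂ c) * t) - 1 - (starRingEnd ℂ c) * t) := by
  -- Fubini needs a jointly measurable version of `W`.
  obtain ⟨W', hW'meas, hW'W⟩ := exists_measurable_uncurry_ae_eq_of_ae_continuous hW.meas hW.cont
  let X : ℝ → Ω → ℂ := fun s x => cexp (I * (omg * s + γ * W' s x))
  let ν := volume.restrict (Ioc (0 : ℝ) t)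
  have hX : Measurable (uncurry X) := by fun_prop
  have hXnorm : ∀ s x, ‖X s x‖ ≤ 1 := fun s x => by
    simp [X, norm_exp]
  have hZX : ∀ᵐ x ∂μ, Z t x = ∫ s, X s x ∂ν := by
    filter_upwards [hW'W] with x hx
    simp [hZ, intervalIntegral.integral_of_le ht, X, ν, hx]
  have hcov : ∀ᵐ p ∂(ν.prod ν), ∫ x, conj (X p.1 x) * X p.2 x ∂μ = expCov c p.1 p.2 := by
    rw [Measure.prod_restrict]
    filter_upwards [ae_restrict_mem (measurableSet_Ioc.prod measurableSet_Ioc)] with p hp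
    rw [hc, ← hW.integral_conj_cexp_mul_cexp omg γ hp.1.1.le hp.2.1.le]
    refine integral_congr_ae ?_
    filter_upwards [hW'W] with x hx
    simp [X, hx]
  calc ∫ x, conj (Z t x) * Z t x ∂μ
      = ∫ x, conj (∫ s, X s x ∂ν) * ∫ s, X s x ∂ν ∂μ :=
        integral_congr_ae (by filter_upwards [hZX] with x hx; rw [hx])
    _ = ∫ p, ∫ x, conj (X p.1 x) * X p.2 x ∂μ ∂(ν.prod ν) :=
        integral_conj_integral_mul_integral hX hXnorm
    _ = ∫ p, expCov c p.1 p.2 ∂(ν.prod ν) := integral_congr_ae hcov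
    _ = _ := integral_expCov_prod hc0 ht

/-- `E[|Z_t|²] = c⁻²(e^{ct} − 1 − ct) + conj(c)⁻²(e^{conj(c)t} − 1 − conj(c)t)`,
where `Z_t = ∫_0^t e^{i(ωs+γW_s)} ds` and `c = iω − γ²/2`. -/
theorem expectation_abs_sq_Z
    {Ω : Type*} [MeasurableSpace Ω] (μ : Measure Ω) [IsProbabilityMeasure μ]
    (W : ℝ → Ω → ℝ) (hW : IsStdBrownian μ W)
    (omg γ : ℝ) (hγ : 0 < γ) (c : ℂ) (hc : c = Complex.I * omg - (γ : ℂ) ^ 2 / 2)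
    (hc0 : c ≠ 0) (t : ℝ) (ht : 0 ≤ t)
    (Z : ℝ → Ω → ℂ)
    (hZ : ∀ u x, Z u x = ∫ s in (0:ℝ)..u,
        Complex.exp (Complex.I * ((omg : ℂ) * s + (γ : ℂ) * (W s x : ℂ)))) :
    ∫ x, (starRingEnd ℂ) (Z t x) * Z t x ∂μ =
      (c ^ 2)⁻¹ * (Complex.exp (c * t) - 1 - c * t)
        + ((starRingEnd ℂ c) ^ 2)⁻¹ *
          (Complex.exp ((starRingEnd ℂ c) * t) - 1 - (starRingEnd ℂ c) * t) :=
  expectation_abs_sq_Z_general μ W hW omg γ c hc hc0 t ht Z hZ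
end

section
/- Let φ_t = ωt + γW_t with W standard Brownian motion and c = iω − γ²/2 ≠ 0. For fixed t ≥ 0, the random variables e^{−iφ_t} Z_t and conj(Z_t) have the same distribution, where Z_t = ∫_0^t e^{iφ_s} ds. -/
/-!
Discretize on the uniform grid of mesh `t / n`: `Z_t` is the a.s. limit both of the left and of
the right Riemann sums of `e^{iφ}`. After multiplying the left sum by `e^{-iφ_t}` and conjugating
the right sum, both become the same function of the vector of Brownian increments on the grid,
taken in reverse order for the first and in natural order for the second. These increments are
i.i.d., so reversing them does not change their joint law; hence the two discretized variables
have the same law for every `n`, and so do their a.s. limits.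
-/

open MeasureTheory ProbabilityTheory

open Filter Topology Finset

theorem map_eq_of_ae_tendsto_of_map_eq {Ω E : Type*} [MeasurableSpace Ω] {μ : Measure Ω}
    [IsProbabilityMeasure μ] [PseudoMetricSpace E] [MeasurableSpace E] [BorelSpace E]
    {X Y : ℕ → Ω → E} {Xlim Ylim : Ω → E}
    (hXm : ∀ n, AEMeasurable (X n) μ) (hYm : ∀ n, AEMeasurable (Y n) μ)
    (hX : ∀ᵐ x ∂μ, Tendsto (fun n => X n x) atTop (𝓝 (Xlim x)))
    (hY : ∀ᵐ x ∂μ, Tendsto (fun n => Y n x) atTop (𝓝 (Ylim x)))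
    (hXY : ∀ᶠ n in atTop, μ.map (X n) = μ.map (Y n)) :
    μ.map Xlim = μ.map Ylim := by
  have hX' := tendstoInDistribution_of_ae_tendsto hXm
    (aemeasurable_of_tendsto_metrizable_ae' hXm hX) hX
  have hY' := tendstoInDistribution_of_ae_tendsto hYm
    (aemeasurable_of_tendsto_metrizable_ae' hYm hY) hY
  have := tendsto_nhds_unique hX'.tendsto
    (hY'.tendsto.congr' (hXY.mono fun n hn => Subtype.ext hn.symm))
  exact congrArg Subtype.val this

section RiemannSums

variable {E : Type*} [NormedAddCommGroup E] [NormedSpace ℝ E]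

theorem norm_smul_sub_intervalIntegral_le [CompleteSpace E] {ψ : ℝ → E} {a b C : ℝ} {v : E}
    (hab : a ≤ b) (hψ : IntervalIntegrable ψ volume a b)
    (h : ∀ s ∈ Set.Ioc a b, ‖v - ψ s‖ ≤ C) :
    ‖(b - a) • v - ∫ s in a..b, ψ s‖ ≤ C * (b - a) := by
  calc ‖(b - a) • v - ∫ s in a..b, ψ s‖ = ‖∫ s in a..b, (v - ψ s)‖ := by
        rw [intervalIntegral.integral_sub intervalIntegrable_const hψ,
          intervalIntegral.integral_const]
    _ ≤ C * |b - a| :=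
        intervalIntegral.norm_integral_le_of_norm_le_const (by rwa [Set.uIoc_of_le hab])
    _ = C * (b - a) := by rw [abs_of_nonneg (sub_nonneg.2 hab)]

theorem intervalIntegral_eq_sum_uniformGrid {ψ : ℝ → E} (hψ : Continuous ψ) (t : ℝ) {n : ℕ}
    (hn : n ≠ 0) :
    ∫ s in (0 : ℝ)..t, ψ s = ∑ k ∈ range n, ∫ s in k * (t / n)..(k + 1) * (t / n), ψ s := by
  have h := intervalIntegral.sum_integral_adjacent_intervals (a := fun k : ℕ => k * (t / n))
    (n := n) (f := ψ) fun k _ => hψ.intervalIntegrable (μ := volume) _ _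
  simp only [Nat.cast_zero, zero_mul, Nat.cast_succ] at h
  rw [mul_div_cancel₀ t (Nat.cast_ne_zero.2 hn)] at h
  exact h.symm

theorem Icc_uniformGrid_subset {t : ℝ} (ht : 0 ≤ t) {n k : ℕ} (hk : k < n) :
    Set.Icc (k * (t / n)) ((k + 1) * (t / n)) ⊆ Set.Icc 0 t := by
  have hn : (0 : ℝ) < n := by exact_mod_cast (Nat.zero_le k).trans_lt hk
  refine Set.Icc_subset_Icc (by positivity) ?_
  calc ((k : ℝ) + 1) * (t / n) ≤ n * (t / n) := by
        gcongr
        exact_mod_cast hk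
    _ = t := mul_div_cancel₀ t hn.ne'

theorem tendsto_riemannSum_uniformGrid [CompleteSpace E] {ψ : ℝ → E} (hψ : Continuous ψ)
    {t : ℝ} (ht : 0 ≤ t) {ξ : ℕ → ℕ → ℝ}
    (hξ : ∀ n k : ℕ, k < n → ξ n k ∈ Set.Icc (k * (t / n)) ((k + 1) * (t / n))) :
    Tendsto (fun n : ℕ => (t / n) • ∑ k ∈ range n, ψ (ξ n k)) atTop
      (𝓝 (∫ s in (0 : ℝ)..t, ψ s)) := by
  rcases ht.eq_or_lt with rfl | ht
  · simp
  rw [Metric.tendsto_atTop]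
  intro ε hε
  obtain ⟨δ, hδ, hψδ⟩ := Metric.uniformContinuousOn_iff_le.1
    ((isCompact_Icc (a := 0) (b := t)).uniformContinuousOn_of_continuous hψ.continuousOn)
    (ε / (2 * t)) (by positivity)
  obtain ⟨N, hN⟩ := exists_nat_gt (t / δ)
  refine ⟨N + 1, fun n hn => ?_⟩
  have hn0 : (0 : ℝ) < n := by exact_mod_cast Nat.succ_pos N |>.trans_le hn
  have hmesh : t / n ≤ δ := by
    rw [div_le_iff₀ hn0, mul_comm, ← div_le_iff₀ hδ]
    exact hN.le.trans (by exact_mod_cast (Nat.le_succ N).trans hn)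
  have hcell : ∀ k ∈ range n,
      ‖(t / n) • ψ (ξ n k) - ∫ s in k * (t / n)..(k + 1) * (t / n), ψ s‖
        ≤ ε / (2 * t) * (t / n) := by
    intro k hk
    have hk := mem_range.1 hk
    have hlen : ((k : ℝ) + 1) * (t / n) - k * (t / n) = t / n := by ring
    have hle : (k : ℝ) * (t / n) ≤ (k + 1) * (t / n) := by
      have : 0 ≤ t / n := by positivity
      linarith
    suffices hbound : ∀ s ∈ Set.Ioc (k * (t / n)) ((k + 1) * (t / n)),
        ‖ψ (ξ n k) - ψ s‖ ≤ ε / (2 * t) by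
      simpa only [hlen] using
        norm_smul_sub_intervalIntegral_le hle (hψ.intervalIntegrable _ _) hbound
    intro s hs
    have hs' : s ∈ Set.Icc (k * (t / n)) ((k + 1) * (t / n)) := Set.Ioc_subset_Icc_self hs
    have hξk := hξ n k hk
    rw [← dist_eq_norm]
    refine hψδ _ (Icc_uniformGrid_subset ht.le hk hξk) _ (Icc_uniformGrid_subset ht.le hk hs') ?_
    rw [Real.dist_eq, abs_le]
    constructor <;> nlinarith [hξk.1, hξk.2, hs'.1, hs'.2]
  calc dist ((t / n) • ∑ k ∈ range n, ψ (ξ n k)) (∫ s in (0 : ℝ)..t, ψ s)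
      = ‖∑ k ∈ range n, ((t / n) • ψ (ξ n k)
          - ∫ s in k * (t / n)..(k + 1) * (t / n), ψ s)‖ := by
        rw [dist_eq_norm, intervalIntegral_eq_sum_uniformGrid hψ t (by exact_mod_cast hn0.ne'),
          smul_sum, sum_sub_distrib]
    _ ≤ ∑ _k ∈ range n, ε / (2 * t) * (t / n) := norm_sum_le_of_le _ hcell
    _ = ε / 2 := by
        rw [sum_const, card_range, nsmul_eq_mul]
        field_simp
    _ < ε := half_lt_self hε

end RiemannSums

section PartialSums

variable {M : Type*} [AddCommGroup M] {n : ℕ}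

theorem Fin.partialSum_increments (f : Fin (n + 1) → M) (j : Fin (n + 1)) :
    Fin.partialSum (fun i : Fin n => f i.succ - f i.castSucc) j = f j - f 0 := by
  induction j using Fin.inductionOn with
  | zero => simp
  | succ j ih => rw [Fin.partialSum_succ, ih]; abel

theorem Fin.partialSum_rev_increments (f : Fin (n + 1) → M) (j : Fin (n + 1)) :
    Fin.partialSum (fun i : Fin n => f i.rev.succ - f i.rev.castSucc) j =
      f (Fin.last n) - f j.rev := by
  have h := Fin.partialSum_increments (fun j => -f j.rev) j
  simp only [Fin.rev_succ, Fin.rev_castSucc, Fin.rev_zero, neg_sub_neg] at h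
  exact h

@[fun_prop]
theorem Fin.measurable_partialSum (j : Fin (n + 1)) :
    Measurable fun y : Fin n → ℝ => Fin.partialSum y j := by
  induction j using Fin.inductionOn with
  | zero => simp
  | succ j ih =>
    simp only [Fin.partialSum_succ]
    exact ih.add (measurable_pi_apply j)

end PartialSums

section Increments

variable {Ω : Type*} {W : ℝ → Ω → ℝ} {n : ℕ}

def increments (W : ℝ → Ω → ℝ) (ts : Fin (n + 1) → ℝ) (x : Ω) : Fin n → ℝ :=
  fun i => W (ts i.succ) x - W (ts i.castSucc) x

theorem partialSum_increments (ts : Fin (n + 1) → ℝ) (x : Ω) (j : Fin (n + 1)) :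
    Fin.partialSum (increments W ts x) j = W (ts j) x - W (ts 0) x :=
  Fin.partialSum_increments (fun j => W (ts j) x) j

theorem partialSum_increments_rev (ts : Fin (n + 1) → ℝ) (x : Ω) (j : Fin (n + 1)) :
    Fin.partialSum (increments W ts x ∘ Fin.rev) j = W (ts (Fin.last n)) x - W (ts j.rev) x :=
  Fin.partialSum_rev_increments (fun j => W (ts j) x) j

noncomputable def conjRiemannSumOfIncrements (omg γ t : ℝ) (n : ℕ) (y : Fin n → ℝ) : ℂ :=
  (t / n) • ∑ k : Fin n, Complex.exp
    (-(Complex.I * ((omg * ((k + 1) * (t / n)) + γ * Fin.partialSum y k.succ : ℝ) : ℂ)))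

theorem measurable_conjRiemannSumOfIncrements (omg γ t : ℝ) (n : ℕ) :
    Measurable (conjRiemannSumOfIncrements omg γ t n) := by
  unfold conjRiemannSumOfIncrements
  fun_prop

variable {omg γ : ℝ} {φ : ℝ → Ω → ℝ}

theorem conj_rightRiemannSum_eq (hφ : ∀ s x, φ s x = omg * s + γ * W s x) (t : ℝ) {x : Ω}
    (hx : W 0 x = 0) :
    starRingEnd ℂ ((t / n) • ∑ k ∈ range n, Complex.exp (Complex.I * φ ((k + 1) * (t / n)) x)) =
      conjRiemannSumOfIncrements omg γ t n
        (increments W (fun j : Fin (n + 1) => j * (t / n)) x) := by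
  rw [conjRiemannSumOfIncrements, ← Fin.sum_univ_eq_sum_range, Complex.real_smul,
    Complex.real_smul, map_mul, Complex.conj_ofReal, map_sum]
  congr 1
  refine sum_congr rfl fun k _ => ?_
  rw [partialSum_increments]
  simp [hφ, hx, ← Complex.exp_conj]

theorem exp_mul_leftRiemannSum_eq (hφ : ∀ s x, φ s x = omg * s + γ * W s x) (t : ℝ) (x : Ω)
    (hn : n ≠ 0) :
    Complex.exp (-Complex.I * φ t x) *
        ((t / n) • ∑ k ∈ range n, Complex.exp (Complex.I * φ (k * (t / n)) x)) =
      conjRiemannSumOfIncrements omg γ t n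
        (increments W (fun j : Fin (n + 1) => j * (t / n)) x ∘ Fin.rev) := by
  have hlast : ((Fin.last n : ℕ) : ℝ) * (t / n) = t := by
    rw [Fin.val_last]
    field_simp
  -- the reindexing `k ↦ n - 1 - k` turns `φ_t - φ_{(n-1-k) t/n}` into the phase at `(k+1) t/n`
  have hrev (k : Fin n) : ((k.rev : ℕ) : ℝ) * (t / n) = t - (k + 1) * (t / n) := by
    rw [Fin.val_rev, Nat.cast_sub (by omega)]
    push_cast
    field_simp
  rw [conjRiemannSumOfIncrements, ← Fin.sum_univ_eq_sum_range, ← Equiv.sum_comp Fin.revPerm,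
    mul_smul_comm, mul_sum]
  congr 1
  refine sum_congr rfl fun k _ => ?_
  rw [partialSum_increments_rev, ← Complex.exp_add]
  congr 1
  simp only [Fin.revPerm_apply, Fin.rev_succ, Fin.val_castSucc, hlast, hrev, hφ]
  push_cast
  ring

end Increments

namespace IsStdBrownian

variable {Ω : Type*} [MeasurableSpace Ω] {μ : Measure Ω} {W : ℝ → Ω → ℝ} {n : ℕ}

theorem map_increments_comp {ts : Fin (n + 1) → ℝ} (hW : IsStdBrownian μ W)
    (hts : Monotone ts) (h0 : 0 ≤ ts 0) {σ : Fin n → Fin n} (hσ : σ.Injective) :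
    μ.map (fun x => increments W ts x ∘ σ) =
      Measure.pi fun i => gaussianReal 0 (ts (σ i).succ - ts (σ i).castSucc).toNNReal := by
  refine (((hW.indep_incr n ts hts).precomp hσ).map_fun_eq_pi_map
    fun i => ((hW.meas _).sub (hW.meas _)).aemeasurable).trans ?_
  congr 1
  funext i
  exact hW.incr_law _ _ (h0.trans (hts (Fin.zero_le _))) (hts (Fin.castSucc_le_succ _))

theorem map_increments_rev (hW : IsStdBrownian μ W) {t : ℝ} (ht : 0 ≤ t) :
    μ.map (fun x => increments W (fun j : Fin (n + 1) => j * (t / n)) x ∘ Fin.rev) =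
      μ.map (increments W fun j : Fin (n + 1) => j * (t / n)) := by
  have hts : Monotone fun j : Fin (n + 1) => (j : ℝ) * (t / n) := fun i j hij =>
    mul_le_mul_of_nonneg_right (by exact_mod_cast hij) (by positivity)
  have hspacing (i : Fin n) : ((i.succ : ℝ) * (t / n) - i.castSucc * (t / n)) = t / n := by
    simp only [Fin.val_succ, Fin.val_castSucc, Nat.cast_add, Nat.cast_one]
    ring
  have h0 : (0 : ℝ) ≤ ((0 : Fin (n + 1)) : ℝ) * (t / n) := by simp
  have hid := hW.map_increments_comp hts h0 Function.injective_id
  simp only [Function.comp_id] at hid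
  rw [hW.map_increments_comp hts h0 Fin.rev_injective, hid]
  simp only [hspacing, id]

theorem map_exp_mul_leftRiemannSum_eq (hW : IsStdBrownian μ W) {omg γ : ℝ} {φ : ℝ → Ω → ℝ}
    (hφ : ∀ s x, φ s x = omg * s + γ * W s x) {t : ℝ} (ht : 0 ≤ t) (hn : n ≠ 0) :
    μ.map (fun x => Complex.exp (-Complex.I * φ t x) *
        ((t / n) • ∑ k ∈ range n, Complex.exp (Complex.I * φ (k * (t / n)) x))) =
      μ.map (fun x => starRingEnd ℂ
        ((t / n) • ∑ k ∈ range n, Complex.exp (Complex.I * φ ((k + 1) * (t / n)) x))) := by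
  set V := increments W fun j : Fin (n + 1) => (j : ℝ) * (t / n)
  set G := conjRiemannSumOfIncrements omg γ t n
  have hV : Measurable V := measurable_pi_lambda _ fun i => (hW.meas _).sub (hW.meas _)
  have hVrev : Measurable fun x => V x ∘ Fin.rev :=
    measurable_pi_lambda _ fun i => (hW.meas _).sub (hW.meas _)
  have hG : Measurable G := measurable_conjRiemannSumOfIncrements omg γ t n
  have hleft : (fun x => Complex.exp (-Complex.I * φ t x) *
      ((t / n) • ∑ k ∈ range n, Complex.exp (Complex.I * φ (k * (t / n)) x))) =
        G ∘ fun x => V x ∘ Fin.rev :=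
    funext fun x => exp_mul_leftRiemannSum_eq hφ t x hn
  rw [hleft, ← Measure.map_map hG hVrev, hW.map_increments_rev ht, Measure.map_map hG hV]
  exact Measure.map_congr (hW.start.mono fun x hx => (conj_rightRiemannSum_eq hφ t hx).symm)

end IsStdBrownian

theorem time_reversal_Z_general
    {Ω : Type*} [MeasurableSpace Ω] (μ : Measure Ω) [IsProbabilityMeasure μ]
    (W : ℝ → Ω → ℝ) (hW : IsStdBrownian μ W)
    (omg γ : ℝ)
    (t : ℝ) (ht : 0 ≤ t)
    (φ : ℝ → Ω → ℝ) (hφ : ∀ s x, φ s x = omg * s + γ * W s x)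
    (Z : ℝ → Ω → ℂ)
    (hZ : ∀ u x, Z u x = ∫ s in (0:ℝ)..u, Complex.exp (Complex.I * (φ s x : ℂ))) :
    μ.map (fun x => Complex.exp (-Complex.I * (φ t x : ℂ)) * Z t x) =
      μ.map (fun x => (starRingEnd ℂ) (Z t x)) := by
  have hφm (s : ℝ) : Measurable (φ s) := by
    simp_rw [funext (hφ s)]
    exact measurable_const.add ((hW.meas s).const_mul γ)
  have hpath : ∀ᵐ x ∂μ, Continuous fun s => Complex.exp (Complex.I * (φ s x : ℂ)) :=
    hW.cont.mono fun x hx => by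
      simp_rw [hφ]
      fun_prop
  have hstep (n : ℕ) : 0 ≤ t / n := by positivity
  refine map_eq_of_ae_tendsto_of_map_eq (fun n => by fun_prop) (fun n => by fun_prop)
    ?_ ?_ ((eventually_ne_atTop 0).mono fun n hn => hW.map_exp_mul_leftRiemannSum_eq hφ ht hn)
  · filter_upwards [hpath] with x hx
    rw [hZ]
    exact (tendsto_riemannSum_uniformGrid hx ht fun n k _ =>
      ⟨le_rfl, by linarith [hstep n]⟩).const_mul _
  · filter_upwards [hpath] with x hx
    rw [hZ]
    exact (Complex.continuous_conj.tendsto _).comp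
      (tendsto_riemannSum_uniformGrid hx ht fun n k _ => ⟨by linarith [hstep n], le_rfl⟩)

/-- For fixed `t ≥ 0`, the random variables `e^{−iφ_t} Z_t` and `conj(Z_t)` have the
same distribution, where `φ_s = ωs + γ W_s` and `Z_t = ∫_0^t e^{iφ_s} ds`. -/
theorem time_reversal_Z
    {Ω : Type*} [MeasurableSpace Ω] (μ : Measure Ω) [IsProbabilityMeasure μ]
    (W : ℝ → Ω → ℝ) (hW : IsStdBrownian μ W)
    (omg γ : ℝ) (c : ℂ) (hc : c = Complex.I * omg - (γ : ℂ) ^ 2 / 2) (hc0 : c ≠ 0)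
    (t : ℝ) (ht : 0 ≤ t)
    (φ : ℝ → Ω → ℝ) (hφ : ∀ s x, φ s x = omg * s + γ * W s x)
    (Z : ℝ → Ω → ℂ)
    (hZ : ∀ u x, Z u x = ∫ s in (0:ℝ)..u, Complex.exp (Complex.I * (φ s x : ℂ))) :
    μ.map (fun x => Complex.exp (-Complex.I * (φ t x : ℂ)) * Z t x) =
      μ.map (fun x => (starRingEnd ℂ) (Z t x)) :=
  time_reversal_Z_general μ W hW omg γ t ht φ hφ Z hZ
end

section
/- Let ω > 0, γ > 0, c = iω − γ²/2, and define S_t = c⁻² + |c|⁻² − (conj(c)⁻² + |c|⁻²) e^{−γ²t} for t ≥ 0. Then S_t = ((c + conj(c))/|c|⁴)(conj(c) − c e^{−γ²t}), |S_t| ≤ 2γ²/ω³, and S_t + conj(S_t) = ((c+conj(c))²/|c|⁴)(1 − e^{−γ²t}) with |S_t + conj(S_t)| ≤ 2γ⁴/ω⁴. -/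
/-!
Since `c⁻² + |c|⁻² = c̄ (c + c̄) / |c|⁴` (put both terms over `|c|⁴ = c² c̄²`), and likewise with
`c` and `c̄` exchanged, `S_t` factors as `((c + c̄)/|c|⁴)(c̄ − c e^{−γ²t})`. The prefactor is real
of modulus `γ²/|c|⁴`, the second factor has modulus at most `2|c|` because `0 < e^{−γ²t} ≤ 1`, and
`|c| ≥ |Im c| = ω`. Adding the conjugate of the factored form gives `(c + c̄)²/|c|⁴ (1 − e^{−γ²t})`,
with `0 ≤ 1 − e^{−γ²t} ≤ 1`.
-/

open ComplexConjugate

namespace Complex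

noncomputable def secularTerm (c E : ℂ) : ℂ :=
  (c ^ 2)⁻¹ + ((‖c‖ : ℂ) ^ 2)⁻¹ - ((conj c ^ 2)⁻¹ + ((‖c‖ : ℂ) ^ 2)⁻¹) * E

theorem inv_sq_add_inv_norm_sq (c : ℂ) :
    (c ^ 2)⁻¹ + ((‖c‖ : ℂ) ^ 2)⁻¹ = (c + conj c) / (‖c‖ : ℂ) ^ 4 * conj c := by
  rcases eq_or_ne c 0 with rfl | hc
  · simp
  have hconj : conj c ≠ 0 := (map_ne_zero _).mpr hc
  have hnorm : (‖c‖ : ℂ) ^ 2 = c * conj c := by rw [mul_conj, normSq_eq_norm_sq]; push_cast; rfl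
  rw [show (‖c‖ : ℂ) ^ 4 = ((‖c‖ : ℂ) ^ 2) ^ 2 by ring, hnorm]
  field_simp
  ring

theorem secularTerm_eq (c E : ℂ) :
    secularTerm c E = (c + conj c) / (‖c‖ : ℂ) ^ 4 * (conj c - c * E) := by
  have h := inv_sq_add_inv_norm_sq (conj c)
  rw [norm_conj, conj_conj, add_comm (conj c)] at h
  rw [secularTerm, inv_sq_add_inv_norm_sq, h]
  ring

theorem secularTerm_add_conj (c : ℂ) {E : ℂ} (hE : conj E = E) :
    secularTerm c E + conj (secularTerm c E) = (c + conj c) ^ 2 / (‖c‖ : ℂ) ^ 4 * (1 - E) := by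
  simp only [secularTerm_eq, map_mul, map_div₀, map_add, map_sub, map_pow, conj_conj, conj_ofReal, hE]
  ring

theorem norm_conj_sub_mul_le (c : ℂ) {E : ℂ} (hE : ‖E‖ ≤ 1) : ‖conj c - c * E‖ ≤ 2 * ‖c‖ :=
  calc ‖conj c - c * E‖ ≤ ‖conj c‖ + ‖c‖ * ‖E‖ := (norm_sub_le _ _).trans_eq (by rw [norm_mul])
    _ ≤ 2 * ‖c‖ := by rw [norm_conj]; nlinarith [norm_nonneg c]

theorem norm_secularTerm_le {c E : ℂ} (hc : c.im ≠ 0) (hE : ‖E‖ ≤ 1) :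
    ‖secularTerm c E‖ ≤ 2 * ‖c + conj c‖ / |c.im| ^ 3 := by
  have him : 0 < |c.im| := abs_pos.mpr hc
  have hnorm : 0 < ‖c‖ := him.trans_le (abs_im_le_norm c)
  rw [secularTerm_eq, norm_mul, norm_div, norm_pow, norm_real, norm_norm]
  calc ‖c + conj c‖ / ‖c‖ ^ 4 * ‖conj c - c * E‖
      ≤ ‖c + conj c‖ / ‖c‖ ^ 4 * (2 * ‖c‖) := by gcongr; exact norm_conj_sub_mul_le c hE
    _ = 2 * ‖c + conj c‖ / ‖c‖ ^ 3 := by field_simp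
    _ ≤ 2 * ‖c + conj c‖ / |c.im| ^ 3 := by gcongr; exact abs_im_le_norm c

theorem norm_secularTerm_add_conj_le {c E : ℂ} (hc : c.im ≠ 0) (hEc : conj E = E)
    (hE : ‖1 - E‖ ≤ 1) :
    ‖secularTerm c E + conj (secularTerm c E)‖ ≤ ‖c + conj c‖ ^ 2 / |c.im| ^ 4 := by
  have him : 0 < |c.im| := abs_pos.mpr hc
  rw [secularTerm_add_conj c hEc, norm_mul, norm_div, norm_pow, norm_pow, norm_real, norm_norm]
  calc ‖c + conj c‖ ^ 2 / ‖c‖ ^ 4 * ‖1 - E‖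
      ≤ ‖c + conj c‖ ^ 2 / ‖c‖ ^ 4 := mul_le_of_le_one_right (by positivity) hE
    _ ≤ ‖c + conj c‖ ^ 2 / |c.im| ^ 4 := by gcongr; exact abs_im_le_norm c

theorem norm_one_sub_exp_ofReal_le_one {x : ℝ} (hx : x ≤ 0) : ‖1 - exp x‖ ≤ 1 := by
  have h : (1 : ℂ) - exp x = ((1 - Real.exp x : ℝ) : ℂ) := by push_cast; rfl
  rw [h, norm_real, Real.norm_eq_abs, abs_le]
  constructor <;> linarith [Real.exp_pos x, Real.exp_le_one_iff.mpr hx]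

end Complex

open Complex

theorem secular_term_bounds_general (ω γ t : ℝ) (hω : 0 < ω) (ht : 0 ≤ t)
    (c : ℂ) (hc : c = Complex.I * ω - (γ : ℂ) ^ 2 / 2)
    (S : ℂ)
    (hS : S = (c ^ 2)⁻¹ + ((‖c‖ : ℂ) ^ 2)⁻¹
      - (((starRingEnd ℂ c) ^ 2)⁻¹ + ((‖c‖ : ℂ) ^ 2)⁻¹)
        * Complex.exp (-(γ : ℂ) ^ 2 * t)) :
    S = ((c + starRingEnd ℂ c) / (‖c‖ : ℂ) ^ 4)
        * (starRingEnd ℂ c - c * Complex.exp (-(γ : ℂ) ^ 2 * t))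
    ∧ ‖S‖ ≤ 2 * γ ^ 2 / ω ^ 3
    ∧ S + starRingEnd ℂ S = ((c + starRingEnd ℂ c) ^ 2 / (‖c‖ : ℂ) ^ 4)
        * (1 - Complex.exp (-(γ : ℂ) ^ 2 * t))
    ∧ ‖S + starRingEnd ℂ S‖ ≤ 2 * γ ^ 4 / ω ^ 4 := by
  have him : c.im = ω := by simp [hc, ← ofReal_pow]
  have hre : ‖c + conj c‖ = γ ^ 2 := by
    have h : c.re = -γ ^ 2 / 2 := by simp [hc, ← ofReal_pow]; ring
    rw [add_conj, norm_real, h, Real.norm_eq_abs, show 2 * (-γ ^ 2 / 2) = -γ ^ 2 by ring, abs_neg,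
      abs_of_nonneg (sq_nonneg γ)]
  have hx : -γ ^ 2 * t ≤ 0 := by nlinarith [sq_nonneg γ]
  have hE : exp (-(γ : ℂ) ^ 2 * t) = exp ((-γ ^ 2 * t : ℝ) : ℂ) := by push_cast; rfl
  have hEc : conj (exp ((-γ ^ 2 * t : ℝ) : ℂ)) = exp ((-γ ^ 2 * t : ℝ) : ℂ) := by
    rw [← ofReal_exp, conj_ofReal]
  have hEnorm : ‖exp ((-γ ^ 2 * t : ℝ) : ℂ)‖ ≤ 1 := by
    rw [norm_exp_ofReal]; exact Real.exp_le_one_iff.mpr hx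
  have hcim : c.im ≠ 0 := him ▸ hω.ne'
  rw [hE] at hS ⊢
  change S = secularTerm c _ at hS
  subst hS
  refine ⟨secularTerm_eq c _, ?_, secularTerm_add_conj c hEc, ?_⟩
  · simpa [hre, him, abs_of_pos hω] using norm_secularTerm_le hcim hEnorm
  · calc _ ≤ ‖c + conj c‖ ^ 2 / |c.im| ^ 4 :=
          norm_secularTerm_add_conj_le hcim hEc (norm_one_sub_exp_ofReal_le_one hx)
      _ = γ ^ 4 / ω ^ 4 := by rw [hre, him, abs_of_pos hω]; ring
      _ ≤ 2 * γ ^ 4 / ω ^ 4 := by gcongr; exact le_mul_of_one_le_left (by positivity) one_le_two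

/-- Let `ω > 0`, `γ > 0`, `c = iω − γ²/2`, and
`S_t = c⁻² + |c|⁻² − (conj(c)⁻² + |c|⁻²) e^{−γ²t}` for `t ≥ 0`. Then
`S_t = ((c + conj c)/|c|⁴)(conj c − c e^{−γ²t})`, `|S_t| ≤ 2γ²/ω³`,
`S_t + conj S_t = ((c + conj c)²/|c|⁴)(1 − e^{−γ²t})` and `|S_t + conj S_t| ≤ 2γ⁴/ω⁴`. -/
theorem secular_term_bounds (ω γ t : ℝ) (hω : 0 < ω) (hγ : 0 < γ) (ht : 0 ≤ t)
    (c : ℂ) (hc : c = Complex.I * ω - (γ : ℂ) ^ 2 / 2)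
    (S : ℂ)
    (hS : S = (c ^ 2)⁻¹ + ((‖c‖ : ℂ) ^ 2)⁻¹
      - (((starRingEnd ℂ c) ^ 2)⁻¹ + ((‖c‖ : ℂ) ^ 2)⁻¹)
        * Complex.exp (-(γ : ℂ) ^ 2 * t)) :
    S = ((c + starRingEnd ℂ c) / (‖c‖ : ℂ) ^ 4)
        * (starRingEnd ℂ c - c * Complex.exp (-(γ : ℂ) ^ 2 * t))
    ∧ ‖S‖ ≤ 2 * γ ^ 2 / ω ^ 3
    ∧ S + starRingEnd ℂ S = ((c + starRingEnd ℂ c) ^ 2 / (‖c‖ : ℂ) ^ 4)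
        * (1 - Complex.exp (-(γ : ℂ) ^ 2 * t))
    ∧ ‖S + starRingEnd ℂ S‖ ≤ 2 * γ ^ 4 / ω ^ 4 :=
  secular_term_bounds_general ω γ t hω ht c hc S hS
end
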